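/- For the GU(n) setting with μ = (0^{(n-2)},-1,-1), the set ^S Adm(μ)_DL := {w_{k,l} ∈ ^S Adm(μ) : supp_σ(w_{k,l}) ≠ S̃} equals {w_{k,l} : k = 1 or l ≤ (n+2)/2}. -/

import Mathlib

open Equiv Multiplicative
open Fin.NatCast

namespace GU

/-- The action of the finite Weyl group `S_n` on the translation lattice `ℤ^n`. -/
def permHom (n : ℕ) : Equiv.Perm (Fin n) →* MulAut (Multiplicative (Fin n → ℤ)) where
  toFun u :=
    { toFun := fun l => ofAdd (fun i => toAdd l (u.symm i))
      invFun := fun l => ofAdd (fun i => toAdd l (u i))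
      left_inv := fun l => by
        show ofAdd (fun i => toAdd l (u.symm (u i))) = l
        simp
      right_inv := fun l => by
        show ofAdd (fun i => toAdd l (u (u.symm i))) = l
        simp
      map_mul' := fun a b => rfl }
  map_one' := by
    apply MulEquiv.ext; intro l; rfl
  map_mul' := fun a b => by
    apply MulEquiv.ext; intro l; rfl

/-- The extended affine Weyl group of `GL_n`, realized as `ℤ^n ⋊ S_n`,
where `⟨l, u⟩` represents `t^l · u`. -/
abbrev Wt (n : ℕ) := Multiplicative (Fin n → ℤ) ⋊[permHom n] Equiv.Perm (Fin n)

variable (n : ℕ) [NeZero n]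

/-- The translation element `t^l`. -/
def tW (l : Fin n → ℤ) : Wt n := ⟨ofAdd l, 1⟩

/-- The finite simple reflection `s_i = (i, i+1)` (1-based), as a permutation. -/
def sf (i : ℕ) : Equiv.Perm (Fin n) := Equiv.swap ((i - 1 : ℕ) : Fin n) ((i : ℕ) : Fin n)

/-- The finite simple reflection `s_i` as an element of the extended affine Weyl group. -/
def sW (i : ℕ) : Wt n := ⟨1, sf n i⟩

/-- The affine simple reflection `s_0 = t^{χ_{1,n}^∨} (1 n)`. -/
def s0 : Wt n :=
  ⟨ofAdd (fun j => if j = ((0 : ℕ) : Fin n) then 1 else if j = ((n - 1 : ℕ) : Fin n) then -1 else 0),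
   Equiv.swap ((0 : ℕ) : Fin n) ((n - 1 : ℕ) : Fin n)⟩

/-- The affine simple reflections `s_i`, `i ∈ ℤ/n`. -/
def saff (i : ZMod n) : Wt n := if i = 0 then s0 n else sW n i.val

/-- The descending product `s_{[a,b]} = s_a s_{a-1} ⋯ s_b` (equal to `1` if `a < b`). -/
def sdesc (a b : ℕ) : Wt n := ((List.range (a + 1 - b)).map (fun j => sW n (a - j))).prod

/-- The descending product `s_{[a,b]} = s_a s_{a-1} ⋯ s_b` in the finite Weyl group. -/
def sfdesc (a b : ℕ) : Equiv.Perm (Fin n) :=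
  ((List.range (a + 1 - b)).map (fun j => sf n (a - j))).prod

/-- The cocharacter `μ = (0^{(n-2)}, -1, -1)`. -/
def mu : Fin n → ℤ := fun j => if n - 2 ≤ (j : ℕ) then -1 else 0

/-- The element `w_{k,l} = t^μ s_{[n-2,k]} s_{[n-1,l]}`. -/
def w (k l : ℕ) : Wt n := tW n (mu n) * sdesc n (n - 2) k * sdesc n (n - 1) l

/-- The length function `ℓ(u t^λ) = Σ_{α ∈ Φ₊, uα ∈ Φ₋} |⟨α,λ⟩+1| + Σ_{α ∈ Φ₊, uα ∈ Φ₊} |⟨α,λ⟩|`,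
written for `x = t^l u = u t^{u⁻¹ l}`. -/
def len (x : Wt n) : ℕ :=
  ∑ i : Fin n, ∑ j : Fin n,
    if i < j then
      (toAdd x.left (x.right i) - toAdd x.left (x.right j)
        + (if x.right j < x.right i then 1 else 0)).natAbs
    else 0

/-- The automorphism `σ`, with `σ(s_i) = s_{n-i}` and `σ(t^λ) = t^{λ'}`, `λ'_i = -λ_{n+1-i}`. -/
def sigma (x : Wt n) : Wt n :=
  ⟨ofAdd (fun j => - toAdd x.left j.rev), Fin.revPerm * x.right * Fin.revPerm⟩

/-- The length-zero element `τ = w_{1,2}`. -/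
def tau : Wt n := w n 1 2

/-- Affine reflections: conjugates of the affine simple reflections. -/
def isRefl (r : Wt n) : Prop := ∃ g : Wt n, ∃ i : ZMod n, r = g * saff n i * g⁻¹

/-- The Bruhat order on the extended affine Weyl group: `v ≤ x` iff there is a chain
from `v` to `x` each step of which multiplies by an (affine) reflection and increases length. -/
def bruhatLE (v x : Wt n) : Prop :=
  Relation.ReflTransGen
    (fun a b => (∃ r, isRefl n r ∧ b = a * r) ∧ len n a < len n b) v x

/-- The support of an element of the affine Weyl group: the smallest set of (indices of)
affine simple reflections generating a subgroup containing it. -/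
def supp (x : Wt n) : Set (ZMod n) :=
  ⋂₀ {J : Set (ZMod n) | x ∈ Subgroup.closure (saff n '' J)}

/-- The `σ`-support of `x ∈ W_a τ`: the smallest `Ad(τ)∘σ`-stable set of indices
(`Ad(τ)∘σ` sends `s_i` to `s_{-i-2}`) containing the support of the `W_a`-part of `x`. -/
def suppSigma (x : Wt n) : Set (ZMod n) :=
  ⋂₀ {J : Set (ZMod n) | supp n (x * (tau n)⁻¹) ⊆ J ∧ ∀ i ∈ J, -i - 2 ∈ J}

/-- `S(x,σ)`: the largest subset `S'` of the finite simple reflections with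
`Ad(x)σ(S') = S'`, as a set of (1-based) indices. -/
def SwSigma (x : Wt n) : Set ℕ :=
  ⋃₀ {J : Set ℕ | J ⊆ Set.Icc 1 (n - 1) ∧
    (fun i => x * sigma n (sW n i) * x⁻¹) '' J = sW n '' J}

/-- `x` is of minimal length in its coset `W_0 x`. -/
def minimalInCoset (x : Wt n) : Prop :=
  ∀ u : Equiv.Perm (Fin n), len n x ≤ len n ((⟨1, u⟩ : Wt n) * x)

/-- A single length-preserving `σ`-conjugation step `a ↦ s a σ(s)`. -/
def approxStep (a b : Wt n) : Prop :=
  ∃ i : ZMod n, b = saff n i * a * sigma n (saff n i) ∧ len n b = len n a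

/-- `a ≈ b`: `a` and `b` are connected by length-preserving `σ`-conjugation steps. -/
def approx (a b : Wt n) : Prop := Relation.ReflTransGen (approxStep n) a b

end GU

namespace GU

variable (n : ℕ) [NeZero n]

lemma npos : 0 < n := Nat.pos_of_ne_zero (NeZero.ne n)

lemma fcv {m : ℕ} (h : m < n) : ((m : Fin n) : ℕ) = m := Fin.val_cast_of_lt h

lemma sf_val (i : ℕ) (h1 : 1 ≤ i) (h2 : i ≤ n - 1) (r : Fin n) :
    (sf n i r : ℕ) = if (r : ℕ) = i - 1 then i else if (r : ℕ) = i then i - 1 else (r : ℕ) := by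
  have hn1 := npos n
  have hi : i < n := by omega
  have hi1 : i - 1 < n := by omega
  have e1 : (((i - 1 : ℕ) : Fin n) : ℕ) = i - 1 := fcv n hi1
  have e2 : (((i : ℕ) : Fin n) : ℕ) = i := fcv n hi
  rw [sf, Equiv.swap_apply_def]
  by_cases c1 : (r : ℕ) = i - 1
  · rw [if_pos (Fin.val_injective (by rw [e1]; exact c1)), if_pos c1, e2]
  · by_cases c2 : (r : ℕ) = i
    · rw [if_neg (fun h => c1 (by rw [h]; exact e1)),
        if_pos (Fin.val_injective (by rw [e2]; exact c2)), if_neg c1, if_pos c2, e1]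
    · rw [if_neg (fun h => c1 (by rw [h]; exact e1)), if_neg (fun h => c2 (by rw [h]; exact e2)),
        if_neg c1, if_neg c2]

lemma sfdesc_eval : ∀ (d a b : ℕ), a + 1 - b = d → 1 ≤ b → a ≤ n - 1 → ∀ r : Fin n,
    (sfdesc n a b r : ℕ) = if b ≤ a + 1 ∧ (r : ℕ) = b - 1 then a
      else if b ≤ (r : ℕ) ∧ (r : ℕ) ≤ a then (r : ℕ) - 1 else (r : ℕ) := by
  intro d
  induction d with
  | zero =>
    intro a b hd hb ha r
    have h1 : sfdesc n a b = 1 := by rw [sfdesc, hd, List.range_zero, List.map_nil, List.prod_nil]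
    rw [h1]
    have := r.isLt
    simp only [Equiv.Perm.one_apply]
    split_ifs <;> omega
  | succ d ih =>
    intro a b hd hb ha r
    have hba : b ≤ a := by omega
    have hsplit : sfdesc n a b = sfdesc n a (b + 1) * sf n b := by
      rw [sfdesc, sfdesc, hd, List.range_succ, List.map_append, List.prod_append,
        show a + 1 - (b + 1) = d by omega, List.map_singleton, List.prod_singleton,
        show a - d = b by omega]
    have := r.isLt
    rw [hsplit, Equiv.Perm.mul_apply, ih a (b + 1) (by omega) (by omega) ha,
      sf_val n b hb (by omega)]
    split_ifs <;> omega

lemma sfdesc_val (a b : ℕ) (hb : 1 ≤ b) (ha : a ≤ n - 1) (r : Fin n) :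
    (sfdesc n a b r : ℕ) = if b ≤ a + 1 ∧ (r : ℕ) = b - 1 then a
      else if b ≤ (r : ℕ) ∧ (r : ℕ) ≤ a then (r : ℕ) - 1 else (r : ℕ) :=
  sfdesc_eval n (a + 1 - b) a b rfl hb ha r

lemma prod_sW (L : List ℕ) :
    ((L.map (sW n)).prod : Wt n) = ⟨1, (L.map (sf n)).prod⟩ := by
  induction L with
  | nil => rfl
  | cons a L ih =>
    simp only [List.map_cons, List.prod_cons, ih, sW]
    refine SemidirectProduct.ext ?_ ?_
    · simp [SemidirectProduct.mul_left, map_one]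
    · simp [SemidirectProduct.mul_right]

lemma sdesc_eq (a b : ℕ) : sdesc n a b = ⟨1, sfdesc n a b⟩ := by
  rw [sdesc, sfdesc, show (fun j => sW n (a - j)) = (sW n) ∘ (fun j => a - j) from rfl,
    ← List.map_map, prod_sW, show (fun j => sf n (a - j)) = (sf n) ∘ (fun j => a - j) from rfl,
    ← List.map_map]

lemma w_pair (k l : ℕ) :
    w n k l = ⟨ofAdd (mu n), sfdesc n (n - 2) k * sfdesc n (n - 1) l⟩ := by
  rw [w, sdesc_eq, sdesc_eq, tW]
  refine SemidirectProduct.ext ?_ ?_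
  · simp [SemidirectProduct.mul_left, map_one]
  · simp [SemidirectProduct.mul_right]

end GU

namespace GU

variable (n : ℕ) [NeZero n]

lemma sW_left (i : ℕ) : (sW n i).left = 1 := rfl
lemma sW_right (i : ℕ) : (sW n i).right = sf n i := rfl

/-- The ascending product `saff 0 * saff 1 * ⋯ * saff (m-1)`. -/
def aprod (m : ℕ) : Wt n := ((List.range m).map (fun j => saff n (j : ℕ))).prod

lemma aprod_zero : aprod n 0 = 1 := rfl

lemma aprod_succ (m : ℕ) : aprod n (m + 1) = aprod n m * saff n (m : ℕ) := by
  rw [aprod, aprod, List.range_succ, List.map_append, List.prod_append,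
    List.map_singleton, List.prod_singleton]

lemma aprod_one : aprod n 1 = s0 n := by
  rw [aprod_succ, aprod_zero, one_mul, Nat.cast_zero, saff, if_pos rfl]

lemma saff_pos (m : ℕ) (h1 : 1 ≤ m) (h2 : m < n) : saff n (m : ℕ) = sW n m := by
  have hne : ((m : ℕ) : ZMod n) ≠ 0 := by
    intro h
    have := ZMod.val_cast_of_lt (n := n) h2
    rw [h, ZMod.val_zero] at this
    omega
  rw [saff, if_neg hne, ZMod.val_cast_of_lt h2]

lemma s0_left_apply (h2 : 2 ≤ n) (j : Fin n) :
    toAdd (s0 n).left j = if (j : ℕ) = 0 then 1 else if (j : ℕ) = n - 1 then -1 else 0 := by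
  have e1 : (((0 : ℕ) : Fin n) : ℕ) = 0 := fcv n (by omega)
  have e2 : (((n - 1 : ℕ) : Fin n) : ℕ) = n - 1 := fcv n (by omega)
  show (if j = ((0 : ℕ) : Fin n) then (1:ℤ) else if j = ((n - 1 : ℕ) : Fin n) then -1 else 0) = _
  by_cases c1 : (j : ℕ) = 0
  · rw [if_pos (Fin.val_injective (by rw [e1]; exact c1)), if_pos c1]
  · rw [if_neg (fun h => c1 (by rw [h]; exact e1)), if_neg c1]
    by_cases c2 : (j : ℕ) = n - 1
    · rw [if_pos (Fin.val_injective (by rw [e2]; exact c2)), if_pos c2]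
    · rw [if_neg (fun h => c2 (by rw [h]; exact e2)), if_neg c2]

lemma s0_right_val (h2 : 2 ≤ n) (r : Fin n) :
    ((s0 n).right r : ℕ) = if (r : ℕ) = 0 then n - 1 else if (r : ℕ) = n - 1 then 0 else (r : ℕ) := by
  have e1 : (((0 : ℕ) : Fin n) : ℕ) = 0 := fcv n (by omega)
  have e2 : (((n - 1 : ℕ) : Fin n) : ℕ) = n - 1 := fcv n (by omega)
  show ((Equiv.swap ((0 : ℕ) : Fin n) ((n - 1 : ℕ) : Fin n)) r : ℕ) = _
  rw [Equiv.swap_apply_def]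
  by_cases c1 : (r : ℕ) = 0
  · rw [if_pos (Fin.val_injective (by rw [e1]; exact c1)), if_pos c1, e2]
  · rw [if_neg (fun h => c1 (by rw [h]; exact e1)), if_neg c1]
    by_cases c2 : (r : ℕ) = n - 1
    · rw [if_pos (Fin.val_injective (by rw [e2]; exact c2)), if_pos c2, e1]
    · rw [if_neg (fun h => c2 (by rw [h]; exact e2)), if_neg c2]

lemma aprod_left : ∀ m, 1 ≤ m → m ≤ n - 1 → ∀ j : Fin n,
    toAdd (aprod n m).left j = if (j : ℕ) = 0 then 1 else if (j : ℕ) = n - 1 then -1 else 0 := by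
  intro m
  induction m with
  | zero => omega
  | succ m ih =>
    intro h1 h2 j
    rcases Nat.eq_zero_or_pos m with hm | hm
    · subst hm
      rw [aprod_one, s0_left_apply n (by omega) j]
    · rw [aprod_succ, saff_pos n m hm (by omega), SemidirectProduct.mul_left, sW_left,
        map_one, mul_one]
      exact ih hm (by omega) j

lemma aprod_right : ∀ m, 1 ≤ m → m ≤ n - 1 → ∀ r : Fin n,
    (((aprod n m).right r : Fin n) : ℕ) = if (r : ℕ) = m - 1 then n - 1
      else if (r : ℕ) = n - 1 then 0
      else if (r : ℕ) + 1 ≤ m - 1 then (r : ℕ) + 1 else (r : ℕ) := by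
  intro m
  induction m with
  | zero => omega
  | succ m ih =>
    intro h1 h2 r
    have hr := r.isLt
    rcases Nat.eq_zero_or_pos m with hm | hm
    · subst hm
      rw [aprod_one, s0_right_val n (by omega) r]
      split_ifs <;> omega
    · rw [aprod_succ, saff_pos n m hm (by omega), SemidirectProduct.mul_right, sW_right,
        Equiv.Perm.mul_apply, ih hm (by omega), sf_val n m hm (by omega)]
      split_ifs <;> omega

lemma aprod_mem (J : Set (ZMod n)) : ∀ m, (∀ j, j < m → ((j : ℕ) : ZMod n) ∈ J) →
    aprod n m ∈ Subgroup.closure (saff n '' J) := by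
  intro m
  induction m with
  | zero => exact fun _ => one_mem _
  | succ m ih =>
    intro h
    rw [aprod_succ]
    exact mul_mem (ih fun j hj => h j (by omega))
      (Subgroup.subset_closure ⟨(m : ℕ), h m (by omega), rfl⟩)

end GU

namespace GU
set_option maxHeartbeats 1600000
set_option linter.unusedSectionVars false

lemma iteFact2 {α} {c1 : Prop} [Decidable c1] {x v1 v2 : α} (h : x = if c1 then v1 else v2) :
    (c1 ∧ x = v1) ∨ (¬c1 ∧ x = v2) := by split_ifs at h <;> tauto

lemma iteFact3 {α} {c1 c2 : Prop} [Decidable c1] [Decidable c2] {x v1 v2 v3 : α}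
    (h : x = if c1 then v1 else if c2 then v2 else v3) :
    (c1 ∧ x = v1) ∨ (¬c1 ∧ c2 ∧ x = v2) ∨ (¬c1 ∧ ¬c2 ∧ x = v3) := by
  split_ifs at h <;> tauto

lemma iteFact4 {α} {c1 c2 c3 : Prop} [Decidable c1] [Decidable c2] [Decidable c3]
    {x v1 v2 v3 v4 : α}
    (h : x = if c1 then v1 else if c2 then v2 else if c3 then v3 else v4) :
    (c1 ∧ x = v1) ∨ (¬c1 ∧ c2 ∧ x = v2) ∨ (¬c1 ∧ ¬c2 ∧ c3 ∧ x = v3) ∨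
      (¬c1 ∧ ¬c2 ∧ ¬c3 ∧ x = v4) := by
  split_ifs at h <;> tauto

variable (n : ℕ) [NeZero n]

lemma toAdd_permHom (u : Equiv.Perm (Fin n)) (l : Multiplicative (Fin n → ℤ)) (j : Fin n) :
    toAdd ((permHom n u) l) j = toAdd l (u.symm j) := rfl

lemma mu_apply (j : Fin n) : mu n j = if n - 2 ≤ (j : ℕ) then -1 else 0 := rfl

lemma mul_symm_apply (u v : Equiv.Perm (Fin n)) (x : Fin n) :
    (u * v).symm x = v.symm (u.symm x) := rfl

lemma master1 (l : ℕ) (h3 : 3 ≤ l) (hl : l ≤ n) :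
    w n 1 l = aprod n (l - 2) * tau n := by
  rw [show tau n = w n 1 2 from rfl, w_pair n 1 l, w_pair n 1 2]
  refine SemidirectProduct.ext ?_ ?_
  · refine Multiplicative.toAdd.injective (funext fun j => ?_)
    obtain ⟨m, rfl⟩ := ((aprod n (l - 2)).right).surjective j
    have hm := m.isLt
    simp only [SemidirectProduct.mul_left, toAdd_mul, Pi.add_apply, toAdd_permHom,
      Equiv.Perm.mul_apply, mul_symm_apply, Equiv.symm_apply_apply, toAdd_ofAdd]
    have e1 := iteFact4 (aprod_right n (l - 2) (by omega) (by omega) m)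
    have f1 := iteFact2 (mu_apply n ((aprod n (l - 2)).right m))
    have f2 := iteFact2 (mu_apply n m)
    have f3 := iteFact3 (aprod_left n (l - 2) (by omega) (by omega) ((aprod n (l - 2)).right m))
    omega
  · refine Equiv.ext fun r => Fin.val_injective ?_
    have hr := r.isLt
    simp only [SemidirectProduct.mul_right, Equiv.Perm.mul_apply]
    have e1 := iteFact3 (sfdesc_val n (n - 1) l (by omega) (by omega) r)
    have e2 := iteFact3 (sfdesc_val n (n - 2) 1 (by omega) (by omega)
      ((sfdesc n (n - 1) l) r))
    have e3 := iteFact3 (sfdesc_val n (n - 1) 2 (by omega) (by omega) r)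
    have e4 := iteFact3 (sfdesc_val n (n - 2) 1 (by omega) (by omega)
      ((sfdesc n (n - 1) 2) r))
    have e5 := iteFact4 (aprod_right n (l - 2) (by omega) (by omega)
      ((sfdesc n (n - 2) 1) ((sfdesc n (n - 1) 2) r)))
    omega

lemma master2 (l : ℕ) (h3 : 3 ≤ l) (hl : l ≤ n) :
    w n 2 l = aprod n (l - 2) * sW n (n - 1) * tau n := by
  rw [show tau n = w n 1 2 from rfl, w_pair n 2 l, w_pair n 1 2]
  refine SemidirectProduct.ext ?_ ?_
  · refine Multiplicative.toAdd.injective (funext fun j => ?_)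
    obtain ⟨m, rfl⟩ := ((aprod n (l - 2) * sW n (n - 1)).right).surjective j
    have hm := m.isLt
    simp only [SemidirectProduct.mul_left, SemidirectProduct.mul_right, sW_left, sW_right,
      map_one, one_mul, mul_one, toAdd_mul, Pi.add_apply, toAdd_permHom,
      Equiv.Perm.mul_apply, mul_symm_apply, Equiv.symm_apply_apply, toAdd_ofAdd]
    have e1 := iteFact3 (sf_val n (n - 1) (by omega) (by omega) m)
    have e2 := iteFact4 (aprod_right n (l - 2) (by omega) (by omega) (sf n (n - 1) m))
    have f1 := iteFact2 (mu_apply n ((aprod n (l - 2)).right (sf n (n - 1) m)))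
    have f2 := iteFact2 (mu_apply n m)
    have f3 := iteFact3 (aprod_left n (l - 2) (by omega) (by omega)
      ((aprod n (l - 2)).right (sf n (n - 1) m)))
    omega
  · refine Equiv.ext fun r => Fin.val_injective ?_
    have hr := r.isLt
    simp only [SemidirectProduct.mul_right, sW_right, Equiv.Perm.mul_apply]
    have e1 := iteFact3 (sfdesc_val n (n - 1) l (by omega) (by omega) r)
    have e2 := iteFact3 (sfdesc_val n (n - 2) 2 (by omega) (by omega)
      ((sfdesc n (n - 1) l) r))
    have e3 := iteFact3 (sfdesc_val n (n - 1) 2 (by omega) (by omega) r)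
    have e4 := iteFact3 (sfdesc_val n (n - 2) 1 (by omega) (by omega)
      ((sfdesc n (n - 1) 2) r))
    have e5 := iteFact3 (sf_val n (n - 1) (by omega) (by omega)
      ((sfdesc n (n - 2) 1) ((sfdesc n (n - 1) 2) r)))
    have e6 := iteFact4 (aprod_right n (l - 2) (by omega) (by omega)
      (sf n (n - 1) ((sfdesc n (n - 2) 1) ((sfdesc n (n - 1) 2) r))))
    omega

lemma master3 (k l : ℕ) (hk : 3 ≤ k) (hkl : k < l) (hl : l ≤ n) :
    w n k l = aprod n (l - 2) * (sW n (n - 1) * aprod n (k - 2)) * tau n := by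
  rw [show tau n = w n 1 2 from rfl, w_pair n k l, w_pair n 1 2]
  refine SemidirectProduct.ext ?_ ?_
  · refine Multiplicative.toAdd.injective (funext fun j => ?_)
    obtain ⟨m, rfl⟩ := ((aprod n (l - 2) * (sW n (n - 1) * aprod n (k - 2))).right).surjective j
    have hm := m.isLt
    simp only [SemidirectProduct.mul_left, SemidirectProduct.mul_right, sW_left, sW_right,
      map_one, one_mul, mul_one, toAdd_mul, Pi.add_apply, toAdd_permHom,
      Equiv.Perm.mul_apply, mul_symm_apply, Equiv.symm_apply_apply, toAdd_ofAdd]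
    have e1 := iteFact4 (aprod_right n (k - 2) (by omega) (by omega) m)
    have e2 := iteFact3 (sf_val n (n - 1) (by omega) (by omega) ((aprod n (k - 2)).right m))
    have e3 := iteFact4 (aprod_right n (l - 2) (by omega) (by omega)
      (sf n (n - 1) ((aprod n (k - 2)).right m)))
    have f1 := iteFact2 (mu_apply n
      ((aprod n (l - 2)).right (sf n (n - 1) ((aprod n (k - 2)).right m))))
    have f2 := iteFact2 (mu_apply n m)
    have f3 := iteFact3 (aprod_left n (l - 2) (by omega) (by omega)
      ((aprod n (l - 2)).right (sf n (n - 1) ((aprod n (k - 2)).right m))))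
    have f4 := iteFact3 (aprod_left n (k - 2) (by omega) (by omega) ((aprod n (k - 2)).right m))
    omega
  · refine Equiv.ext fun r => Fin.val_injective ?_
    have hr := r.isLt
    simp only [SemidirectProduct.mul_right, sW_right, Equiv.Perm.mul_apply]
    have e1 := iteFact3 (sfdesc_val n (n - 1) l (by omega) (by omega) r)
    have e2 := iteFact3 (sfdesc_val n (n - 2) k (by omega) (by omega)
      ((sfdesc n (n - 1) l) r))
    have e3 := iteFact3 (sfdesc_val n (n - 1) 2 (by omega) (by omega) r)
    have e4 := iteFact3 (sfdesc_val n (n - 2) 1 (by omega) (by omega)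
      ((sfdesc n (n - 1) 2) r))
    have e5 := iteFact4 (aprod_right n (k - 2) (by omega) (by omega)
      ((sfdesc n (n - 2) 1) ((sfdesc n (n - 1) 2) r)))
    have e6 := iteFact3 (sf_val n (n - 1) (by omega) (by omega)
      ((aprod n (k - 2)).right ((sfdesc n (n - 2) 1) ((sfdesc n (n - 1) 2) r))))
    have e7 := iteFact4 (aprod_right n (l - 2) (by omega) (by omega)
      (sf n (n - 1) ((aprod n (k - 2)).right ((sfdesc n (n - 2) 1) ((sfdesc n (n - 1) 2) r)))))
    omega

end GU

namespace GU
set_option maxHeartbeats 1600000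
set_option linter.unusedSectionVars false

variable (n : ℕ) [NeZero n]

/-- The indicator of the interval `[0,c]`. -/
def ind (c : ℕ) (r : Fin n) : ℤ := if (r : ℕ) ≤ c then 1 else 0

lemma ind_def (c : ℕ) (r : Fin n) : ind n c r = if (r : ℕ) ≤ c then 1 else 0 := rfl

/-- The subgroup of elements preserving the `c`-th affine cut. -/
def cutSub (c : ℕ) : Subgroup (Wt n) where
  carrier := {x | ∀ r : Fin n, toAdd x.left (x.right r) = ind n c (x.right r) - ind n c r}
  one_mem' := by
    intro r
    simp [SemidirectProduct.one_left, SemidirectProduct.one_right]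
  mul_mem' := by
    intro a b ha hb
    intro r
    simp only [SemidirectProduct.mul_left, SemidirectProduct.mul_right, toAdd_mul,
      Pi.add_apply, toAdd_permHom, Equiv.Perm.mul_apply, mul_symm_apply,
      Equiv.symm_apply_apply]
    rw [ha (b.right r), hb r]
    ring
  inv_mem' := by
    intro x hx
    intro r
    have h := hx (x.right.symm r)
    rw [Equiv.apply_symm_apply] at h
    simp only [SemidirectProduct.inv_left, SemidirectProduct.inv_right, toAdd_permHom,
      Equiv.Perm.inv_def, Equiv.symm_symm, Equiv.apply_symm_apply, toAdd_inv, Pi.neg_apply]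
    rw [h]
    ring

lemma mem_cutSub {c : ℕ} {x : Wt n} : x ∈ cutSub n c ↔
    ∀ r : Fin n, toAdd x.left (x.right r) = ind n c (x.right r) - ind n c r := Iff.rfl

lemma saff_mem_cut (h2 : 2 ≤ n) (j : ZMod n) (c : ℕ) (hc : c < n)
    (hne : j.val ≠ (if c = n - 1 then 0 else c + 1)) : saff n j ∈ cutSub n c := by
  by_cases hj : j = 0
  · subst hj
    rw [ZMod.val_zero] at hne
    have hcn : c ≠ n - 1 := by
      intro h
      apply hne
      rw [if_pos h]
    rw [saff, if_pos rfl, ← aprod_one, mem_cutSub]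
    intro r
    have hr := r.isLt
    have e1 := iteFact4 (aprod_right n 1 (by omega) (by omega) r)
    have f1 := iteFact3 (aprod_left n 1 (by omega) (by omega) ((aprod n 1).right r))
    have g1 := iteFact2 (ind_def n c ((aprod n 1).right r))
    have g2 := iteFact2 (ind_def n c r)
    omega
  · have hj1 : 1 ≤ j.val := by
      have := (ZMod.val_eq_zero j).not.mpr hj
      omega
    have hjn : j.val < n := ZMod.val_lt j
    have hne' : c = n - 1 ∨ j.val ≠ c + 1 := by
      by_cases h : c = n - 1
      · exact Or.inl h
      · exact Or.inr (by rw [if_neg h] at hne; exact hne)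
    rw [saff, if_neg hj, mem_cutSub]
    intro r
    have hr := r.isLt
    simp only [sW_left, sW_right, toAdd_one, Pi.zero_apply]
    have e1 := iteFact3 (sf_val n j.val hj1 (by omega) r)
    have g1 := iteFact2 (ind_def n c (sf n j.val r))
    have g2 := iteFact2 (ind_def n c r)
    omega

lemma viol2 (l : ℕ) (h3 : 3 ≤ l) (hl : l ≤ n) (c : ℕ)
    (hc : c = n - 1 ∨ c = n - 2 ∨ c + 4 ≤ l) :
    w n 2 l * (tau n)⁻¹ ∉ cutSub n c := by
  rw [master2 n l h3 hl, mul_inv_cancel_right, mem_cutSub]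
  intro hmem
  have hr : ∀ r : Fin n, toAdd (aprod n (l - 2)).left ((aprod n (l - 2)).right (sf n (n - 1) r))
      = ind n c ((aprod n (l - 2)).right (sf n (n - 1) r)) - ind n c r := by
    intro r
    have h := hmem r
    simpa only [SemidirectProduct.mul_left, SemidirectProduct.mul_right, sW_left, sW_right,
      map_one, mul_one, Equiv.Perm.mul_apply] using h
  set r : Fin n := if c + 4 ≤ l then ((l - 3 : ℕ) : Fin n) else ((n - 2 : ℕ) : Fin n) with hrdef
  have hrv : (r : ℕ) = if c + 4 ≤ l then l - 3 else n - 2 := by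
    rw [hrdef]
    split_ifs
    · exact fcv n (by omega)
    · exact fcv n (by omega)
  have h := hr r
  have hrv2 := iteFact2 hrv
  have e1 := iteFact3 (sf_val n (n - 1) (by omega) (by omega) r)
  have e2 := iteFact4 (aprod_right n (l - 2) (by omega) (by omega) (sf n (n - 1) r))
  have f3 := iteFact3 (aprod_left n (l - 2) (by omega) (by omega)
    ((aprod n (l - 2)).right (sf n (n - 1) r)))
  have g1 := iteFact2 (ind_def n c ((aprod n (l - 2)).right (sf n (n - 1) r)))
  have g2 := iteFact2 (ind_def n c r)
  omega

lemma viol3 (k l : ℕ) (hk : 3 ≤ k) (hkl : k < l) (hl : l ≤ n) (c : ℕ)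
    (hc : c = n - 1 ∨ c = n - 2 ∨ c + 4 ≤ l) :
    w n k l * (tau n)⁻¹ ∉ cutSub n c := by
  rw [master3 n k l hk hkl hl, mul_inv_cancel_right, mem_cutSub]
  intro hmem
  have hr : ∀ r : Fin n,
      toAdd (aprod n (l - 2)).left
          ((aprod n (l - 2)).right (sf n (n - 1) ((aprod n (k - 2)).right r)))
        + toAdd (aprod n (k - 2)).left ((aprod n (k - 2)).right r)
      = ind n c ((aprod n (l - 2)).right (sf n (n - 1) ((aprod n (k - 2)).right r)))
        - ind n c r := by
    intro r
    have h := hmem r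
    simpa only [SemidirectProduct.mul_left, SemidirectProduct.mul_right, sW_left, sW_right,
      map_one, one_mul, mul_one, toAdd_mul, Pi.add_apply, toAdd_permHom,
      Equiv.Perm.mul_apply, mul_symm_apply, Equiv.symm_apply_apply] using h
  set r : Fin n := if c + 4 ≤ l then ((l - 3 : ℕ) : Fin n) else ((n - 2 : ℕ) : Fin n) with hrdef
  have hrv : (r : ℕ) = if c + 4 ≤ l then l - 3 else n - 2 := by
    rw [hrdef]
    split_ifs
    · exact fcv n (by omega)
    · exact fcv n (by omega)
  have h := hr r
  have hrv2 := iteFact2 hrv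
  have e0 := iteFact4 (aprod_right n (k - 2) (by omega) (by omega) r)
  have e1 := iteFact3 (sf_val n (n - 1) (by omega) (by omega) ((aprod n (k - 2)).right r))
  have e2 := iteFact4 (aprod_right n (l - 2) (by omega) (by omega)
    (sf n (n - 1) ((aprod n (k - 2)).right r)))
  have f3 := iteFact3 (aprod_left n (l - 2) (by omega) (by omega)
    ((aprod n (l - 2)).right (sf n (n - 1) ((aprod n (k - 2)).right r))))
  have f4 := iteFact3 (aprod_left n (k - 2) (by omega) (by omega) ((aprod n (k - 2)).right r))
  have g1 := iteFact2 (ind_def n c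
    ((aprod n (l - 2)).right (sf n (n - 1) ((aprod n (k - 2)).right r))))
  have g2 := iteFact2 (ind_def n c r)
  omega

lemma neg_sub_val (h2 : 2 ≤ n) (i : ZMod n) :
    (-i - 2 : ZMod n).val = if i.val ≤ n - 2 then n - 2 - i.val else n - 1 := by
  have hv := ZMod.val_lt i
  have hi' : ((i.val : ℕ) : ZMod n) = i := ZMod.natCast_rightInverse i
  by_cases h : i.val ≤ n - 2
  · rw [if_pos h]
    have h0 : (-i - 2 : ZMod n) = ((n - 2 - i.val : ℕ) : ZMod n) := by
      have hsum : ((n - 2 - i.val : ℕ) : ZMod n) + ((i.val : ℕ) : ZMod n) + ((2 : ℕ) : ZMod n)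
          = ((n : ℕ) : ZMod n) := by
        rw [← Nat.cast_add, ← Nat.cast_add]
        congr 1
        omega
      rw [hi', ZMod.natCast_self, Nat.cast_ofNat] at hsum
      linear_combination -hsum
    rw [h0, ZMod.val_cast_of_lt (by omega)]
  · rw [if_neg h]
    have hiv : i.val = n - 1 := by omega
    have h0 : (-i - 2 : ZMod n) = ((n - 1 : ℕ) : ZMod n) := by
      have hsum : ((n - 1 : ℕ) : ZMod n) + ((i.val : ℕ) : ZMod n) + ((2 : ℕ) : ZMod n)
          = ((2 * n : ℕ) : ZMod n) := by
        rw [← Nat.cast_add, ← Nat.cast_add]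
        congr 1
        omega
      rw [hi', Nat.cast_mul, ZMod.natCast_self, mul_zero, Nat.cast_ofNat] at hsum
      linear_combination -hsum
    rw [h0, ZMod.val_cast_of_lt (by omega)]

end GU

namespace GU
set_option maxHeartbeats 1600000
set_option linter.unusedSectionVars false

variable (n : ℕ) [NeZero n]

lemma supp_all (hn : 2 ≤ n) (k l : ℕ) (hk2 : 2 ≤ k) (hkl : k < l) (hl : l ≤ n)
    (hbig : n + 3 ≤ 2 * l) : suppSigma n (w n k l) = Set.univ := by
  have hn3 : 3 ≤ n := by omega
  have hsupp : ∀ i : ZMod n, (i.val + 3 ≤ l ∨ i.val = n - 1) →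
      i ∈ supp n (w n k l * (tau n)⁻¹) := by
    intro i hi
    simp only [supp, Set.mem_sInter, Set.mem_setOf_eq]
    intro J'' hJ''
    by_contra hiJ
    have hvi := ZMod.val_lt i
    set c : ℕ := if i.val = 0 then n - 1 else i.val - 1 with hcdef
    have hcn : c < n := by simp only [hcdef]; split_ifs <;> omega
    have hle : Subgroup.closure (saff n '' J'') ≤ cutSub n c := by
      rw [Subgroup.closure_le]
      rintro x ⟨j, hjJ, rfl⟩
      refine saff_mem_cut n (by omega) j c hcn ?_
      have hjne : j ≠ i := fun h => hiJ (h ▸ hjJ)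
      have hjv : j.val ≠ i.val := fun h => hjne (ZMod.val_injective n h)
      have hvj := ZMod.val_lt j
      simp only [hcdef]
      split_ifs <;> omega
    have hx := hle hJ''
    have hcOK : c = n - 1 ∨ c = n - 2 ∨ c + 4 ≤ l := by
      simp only [hcdef]; split_ifs <;> omega
    rcases Nat.lt_or_ge k 3 with h2' | h3'
    · have hk2' : k = 2 := by omega
      subst hk2'
      exact viol2 n l (by omega) hl c hcOK hx
    · exact viol3 n k l h3' hkl hl c hcOK hx
  apply Set.eq_univ_iff_forall.mpr
  intro i
  simp only [suppSigma, Set.mem_sInter, Set.mem_setOf_eq]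
  rintro J' ⟨hsub, hstab⟩
  by_cases hT : i.val + 3 ≤ l ∨ i.val = n - 1
  · exact hsub (hsupp i hT)
  · have hvi := ZMod.val_lt i
    have hnv := neg_sub_val n (by omega) i
    have hT2 : (-i - 2 : ZMod n).val + 3 ≤ l := by
      rw [hnv, if_pos (by omega)]
      omega
    have hmem : (-i - 2 : ZMod n) ∈ J' := hsub (hsupp _ (Or.inl hT2))
    have h2 := hstab _ hmem
    have hii : -(-i - 2 : ZMod n) - 2 = i := by ring
    rwa [hii] at h2

lemma key (hn : 2 ≤ n) (k l : ℕ) (hk : 1 ≤ k) (hkl : k < l) (hl : l ≤ n) :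
    suppSigma n (w n k l) ≠ Set.univ ↔ (k = 1 ∨ 2 * l ≤ n + 2) := by
  constructor
  · intro hne
    by_contra hcon
    push_neg at hcon
    exact hne (supp_all n hn k l (by omega) hkl hl (by omega))
  · intro hcond
    set J : Set (ZMod n) :=
      {i | i.val + 3 ≤ l ∨ (n + 1 ≤ i.val + l ∧ (k = 1 → i.val ≤ n - 2))} with hJdef
    have hmemJ : w n k l * (tau n)⁻¹ ∈ Subgroup.closure (saff n '' J) := by
      have hsWmem : 2 ≤ k → 3 ≤ l → sW n (n - 1) ∈ saff n '' J := by
        intro hkk h3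
        refine ⟨((n - 1 : ℕ) : ZMod n), ?_, saff_pos n (n - 1) (by omega) (by omega)⟩
        simp only [hJdef, Set.mem_setOf_eq, ZMod.val_cast_of_lt (show n - 1 < n by omega)]
        omega
      have haJ : ∀ m : ℕ, m + 2 ≤ l → ∀ j, j < m → ((j : ℕ) : ZMod n) ∈ J := by
        intro m hm j hj
        simp only [hJdef, Set.mem_setOf_eq, ZMod.val_cast_of_lt (show j < n by omega)]
        omega
      rcases Nat.lt_or_ge k 2 with hk1 | hk2
      · have hk1' : k = 1 := by omega
        subst hk1'
        rcases Nat.lt_or_ge l 3 with hl2 | hl3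
        · have hl2' : l = 2 := by omega
          subst hl2'
          rw [show w n 1 2 = tau n from rfl, mul_inv_cancel]
          exact one_mem _
        · rw [master1 n l hl3 hl, mul_inv_cancel_right]
          exact aprod_mem n J (l - 2) (haJ (l - 2) (by omega))
      · rcases Nat.lt_or_ge k 3 with hk2' | hk3
        · have hk2'' : k = 2 := by omega
          subst hk2''
          rw [master2 n l (by omega) hl, mul_inv_cancel_right]
          exact mul_mem (aprod_mem n J (l - 2) (haJ (l - 2) (by omega)))
            (Subgroup.subset_closure (hsWmem (by omega) (by omega)))
        · rw [master3 n k l hk3 hkl hl, mul_inv_cancel_right]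
          exact mul_mem (aprod_mem n J (l - 2) (haJ (l - 2) (by omega)))
            (mul_mem (Subgroup.subset_closure (hsWmem (by omega) (by omega)))
              (aprod_mem n J (k - 2) (haJ (k - 2) (by omega))))
    have hstab : ∀ i ∈ J, (-i - 2 : ZMod n) ∈ J := by
      intro i hi
      have hv := ZMod.val_lt i
      have g := iteFact2 (neg_sub_val n hn i)
      simp only [hJdef, Set.mem_setOf_eq] at hi ⊢
      omega
    have hJ_fam : supp n (w n k l * (tau n)⁻¹) ⊆ J := Set.sInter_subset_of_mem hmemJ
    have hSS : suppSigma n (w n k l) ⊆ J := Set.sInter_subset_of_mem ⟨hJ_fam, hstab⟩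
    intro huniv
    rcases hcond with hk1 | h2l
    · have hi0 : ((n - 1 : ℕ) : ZMod n) ∉ J := by
        simp only [hJdef, Set.mem_setOf_eq, ZMod.val_cast_of_lt (show n - 1 < n by omega)]
        omega
      exact hi0 (hSS (huniv ▸ Set.mem_univ _))
    · have hi0 : ((l - 2 : ℕ) : ZMod n) ∉ J := by
        simp only [hJdef, Set.mem_setOf_eq, ZMod.val_cast_of_lt (show l - 2 < n by omega)]
        omega
      exact hi0 (hSS (huniv ▸ Set.mem_univ _))

end GU



/-- `^S Adm(μ)_DL = {w_{k,l} : k = 1 or l ≤ (n+2)/2}`. -/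
theorem stmt8 (n : ℕ) [NeZero n] (hn : 2 ≤ n) :
    {x : GU.Wt n | ∃ k l : ℕ, 1 ≤ k ∧ k < l ∧ l ≤ n ∧ x = GU.w n k l ∧
        GU.suppSigma n (GU.w n k l) ≠ Set.univ} =
    {x : GU.Wt n | ∃ k l : ℕ, 1 ≤ k ∧ k < l ∧ l ≤ n ∧ x = GU.w n k l ∧
        (k = 1 ∨ 2 * l ≤ n + 2)} := by
  ext x
  simp only [Set.mem_setOf_eq]
  constructor
  · rintro ⟨k, l, h1, h2, h3, rfl, h4⟩
    exact ⟨k, l, h1, h2, h3, rfl, (GU.key n hn k l h1 h2 h3).mp h4⟩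
  · rintro ⟨k, l, h1, h2, h3, rfl, h4⟩
    exact ⟨k, l, h1, h2, h3, rfl, (GU.key n hn k l h1 h2 h3).mpr h4⟩
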